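/- arXiv:2509.02535 — 5 statements merged into one kernel-verified Lean document; each statement's English description precedes it below -/
import Mathlib

section
/- Let M be a full SCM and M' a reduced SCM that share the same data (U1, p1, fX, fY) and (U2, p2, fZ), with the parameter γ of M' equal to P_M(S = 1), and suppose P_M(X = 1, Y = 1) > 0. Then P_{M'}(X = 1, Y = 1) = P_M(X = 1, Y = 1), and the probabilities of necessity coincide: P_M(Y_{X=0} = 0, X = 1, Y = 1) / P_M(X = 1, Y = 1) = P_{M'}(Y_{X=0} = 0, X = 1, Y = 1) / P_{M'}(X = 1, Y = 1). -/
open Finset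

attribute [local instance] Classical.propDecidable

/-- A reduced SCM as in the paper: exogenous `U1`, `U2`, a parameter `γ` for the
binary pre-treatment variable `S`, and mechanisms `fX`, `fZ`, `fY`. -/
structure ReducedSCM (U1 U2 : Type) [Fintype U1] [Fintype U2] where
  p1 : U1 → ℝ
  p2 : U2 → ℝ
  gamma : ℝ
  p1_nonneg : ∀ u, 0 ≤ p1 u
  p2_nonneg : ∀ u, 0 ≤ p2 u
  p1_sum : ∑ u, p1 u = 1
  p2_sum : ∑ u, p2 u = 1
  gamma_nonneg : 0 ≤ gamma
  gamma_le_one : gamma ≤ 1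
  fX : U1 → Bool
  fZ : Bool → Bool → U2 → Bool
  fY : Bool → U1 → Bool

namespace ReducedSCM

variable {U1 U2 : Type} [Fintype U1] [Fintype U2]

/-- Probability of a unit `(u1, u2, s)`. -/
def w (M : ReducedSCM U1 U2) (u : U1 × U2 × Bool) : ℝ :=
  M.p1 u.1 * M.p2 u.2.1 * (if u.2.2 then M.gamma else 1 - M.gamma)

/-- Probability of an event. -/
noncomputable def P (M : ReducedSCM U1 U2) (E : U1 × U2 × Bool → Prop) : ℝ :=
  ∑ u, if E u then M.w u else 0

/-- Conditional probability `P(A | B)`. -/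
noncomputable def Pcond (M : ReducedSCM U1 U2) (A B : U1 × U2 × Bool → Prop) : ℝ :=
  M.P (fun u => A u ∧ B u) / M.P B

def S (_M : ReducedSCM U1 U2) (u : U1 × U2 × Bool) : Bool := u.2.2

def X (M : ReducedSCM U1 U2) (u : U1 × U2 × Bool) : Bool := M.fX u.1

def Z (M : ReducedSCM U1 U2) (u : U1 × U2 × Bool) : Bool := M.fZ (M.S u) (M.X u) u.2.1

def Y (M : ReducedSCM U1 U2) (u : U1 × U2 × Bool) : Bool := M.fY (M.Z u) u.1

/-- Potential outcome `Y_{X=x}`. -/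
def Yx (M : ReducedSCM U1 U2) (x : Bool) (u : U1 × U2 × Bool) : Bool :=
  M.fY (M.fZ (M.S u) x u.2.1) u.1

end ReducedSCM

/-- A full SCM as in the paper: exogenous `U1`, `U2`, `U5`, `U6` and mechanisms
`fT`, `fS`, `fX`, `fZ`, `fY`. -/
structure FullSCM (U1 U2 U5 U6 : Type)
    [Fintype U1] [Fintype U2] [Fintype U5] [Fintype U6] where
  p1 : U1 → ℝ
  p2 : U2 → ℝ
  p5 : U5 → ℝ
  p6 : U6 → ℝ
  p1_nonneg : ∀ u, 0 ≤ p1 u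
  p2_nonneg : ∀ u, 0 ≤ p2 u
  p5_nonneg : ∀ u, 0 ≤ p5 u
  p6_nonneg : ∀ u, 0 ≤ p6 u
  p1_sum : ∑ u, p1 u = 1
  p2_sum : ∑ u, p2 u = 1
  p5_sum : ∑ u, p5 u = 1
  p6_sum : ∑ u, p6 u = 1
  fT : U6 → Bool
  fS : Bool → U5 → Bool
  fX : U1 → Bool
  fZ : Bool → Bool → U2 → Bool
  fY : Bool → U1 → Bool

namespace FullSCM

variable {U1 U2 U5 U6 : Type} [Fintype U1] [Fintype U2] [Fintype U5] [Fintype U6]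

/-- Probability of a unit `(u1, u2, u5, u6)`. -/
def w (M : FullSCM U1 U2 U5 U6) (u : U1 × U2 × U5 × U6) : ℝ :=
  M.p1 u.1 * M.p2 u.2.1 * M.p5 u.2.2.1 * M.p6 u.2.2.2

/-- Probability of an event. -/
noncomputable def P (M : FullSCM U1 U2 U5 U6) (E : U1 × U2 × U5 × U6 → Prop) : ℝ :=
  ∑ u, if E u then M.w u else 0

def T (M : FullSCM U1 U2 U5 U6) (u : U1 × U2 × U5 × U6) : Bool := M.fT u.2.2.2

def S (M : FullSCM U1 U2 U5 U6) (u : U1 × U2 × U5 × U6) : Bool := M.fS (M.T u) u.2.2.1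

def X (M : FullSCM U1 U2 U5 U6) (u : U1 × U2 × U5 × U6) : Bool := M.fX u.1

def Z (M : FullSCM U1 U2 U5 U6) (u : U1 × U2 × U5 × U6) : Bool :=
  M.fZ (M.S u) (M.X u) u.2.1

def Y (M : FullSCM U1 U2 U5 U6) (u : U1 × U2 × U5 × U6) : Bool := M.fY (M.Z u) u.1

/-- Potential outcome `Y_{X=x}`. -/
def Yx (M : FullSCM U1 U2 U5 U6) (x : Bool) (u : U1 × U2 × U5 × U6) : Bool :=
  M.fY (M.fZ (M.S u) x u.2.1) u.1

end FullSCM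

/-! In the full model the exogenous values `(u5, u6)` enter only through `S`, and they are independent of
`(u1, u2)`. Summing them out leaves the reduced model's weight `p1 u1 * p2 u2 * P_M(S = s)`, and
`P_M(S = s)` is `γ` or `1 - γ`. So every event determined by `(u1, u2, S)` has the same probability
in both models; `X`, `Y` and `Y_{X=0}` are such events, and the theorem follows. -/

theorem Fintype.sum_ite_comp {β γ R : Type*} [Fintype β] [Fintype γ] [DecidableEq γ]
    [AddCommMonoid R] (g : β → γ) (A : γ → Prop) [DecidablePred A] (f : β → R) :
    ∑ b, (if A (g b) then f b else 0)
      = ∑ c, if A c then ∑ b, (if g b = c then f b else 0) else 0 := by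
  rw [← Finset.sum_fiberwise univ g]
  refine Finset.sum_congr rfl fun c _ => ?_
  split_ifs with hc
  · rw [Finset.sum_filter]
    exact Finset.sum_congr rfl fun b _ => by split_ifs <;> simp_all
  · exact Finset.sum_eq_zero fun b hb => by simp_all

namespace FullSCM

variable {U1 U2 U5 U6 : Type} [Fintype U1] [Fintype U2] [Fintype U5] [Fintype U6]
  (M : FullSCM U1 U2 U5 U6)

def probS (s : Bool) : ℝ :=
  ∑ v : U5 × U6, if M.fS (M.fT v.2) v.1 = s then M.p5 v.1 * M.p6 v.2 else 0

theorem probS_true_add_probS_false : M.probS true + M.probS false = 1 :=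
  calc M.probS true + M.probS false = ∑ v : U5 × U6, M.p5 v.1 * M.p6 v.2 := by
        rw [probS, probS, ← Finset.sum_add_distrib]
        exact Finset.sum_congr rfl fun v _ => by cases M.fS (M.fT v.2) v.1 <;> simp
    _ = 1 := by rw [Fintype.sum_prod_type, ← Finset.sum_mul_sum, M.p5_sum, M.p6_sum, one_mul]

theorem P_eq_sum_probS (E : U1 → U2 → Bool → Prop) :
    M.P (fun u => E u.1 u.2.1 (M.S u))
      = ∑ u1, ∑ u2, ∑ s, if E u1 u2 s then M.p1 u1 * M.p2 u2 * M.probS s else 0 := by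
  rw [P, Fintype.sum_prod_type]
  refine Finset.sum_congr rfl fun u1 _ => ?_
  rw [Fintype.sum_prod_type]
  refine Finset.sum_congr rfl fun u2 _ => ?_
  refine (Fintype.sum_ite_comp (fun v : U5 × U6 => M.fS (M.fT v.2) v.1) (E u1 u2)
    fun v => M.w (u1, u2, v)).trans (Finset.sum_congr rfl fun s _ => ?_)
  simp only [probS, w, Finset.mul_sum, mul_ite, mul_zero, mul_assoc]

theorem P_S_true : M.P (fun u => M.S u = true) = M.probS true := by
  rw [P_eq_sum_probS M fun _ _ s => s = true]
  simp [← Finset.sum_mul, ← Finset.sum_mul_sum, M.p1_sum, M.p2_sum]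

theorem probS_eq (s : Bool) :
    M.probS s = if s then M.P (fun u => M.S u = true) else 1 - M.P (fun u => M.S u = true) := by
  rw [P_S_true]
  cases s
  · simp only [Bool.false_eq_true, if_false]
    linarith [M.probS_true_add_probS_false]
  · rfl

end FullSCM

theorem ReducedSCM.P_eq_sum {U1 U2 : Type} [Fintype U1] [Fintype U2] (M : ReducedSCM U1 U2)
    (E : U1 → U2 → Bool → Prop) :
    M.P (fun u => E u.1 u.2.1 u.2.2) = ∑ u1, ∑ u2, ∑ s,
      if E u1 u2 s then M.p1 u1 * M.p2 u2 * (if s then M.gamma else 1 - M.gamma) else 0 := by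
  simp only [ReducedSCM.P, ReducedSCM.w, Fintype.sum_prod_type]

theorem FullSCM.P_eq_reducedSCM_P
    {U1 U2 U5 U6 : Type} [Fintype U1] [Fintype U2] [Fintype U5] [Fintype U6]
    (M : FullSCM U1 U2 U5 U6) (M' : ReducedSCM U1 U2)
    (hp1 : M'.p1 = M.p1) (hp2 : M'.p2 = M.p2)
    (hgamma : M'.gamma = M.P (fun u => M.S u = true)) (E : U1 → U2 → Bool → Prop) :
    M.P (fun u => E u.1 u.2.1 (M.S u)) = M'.P (fun u => E u.1 u.2.1 u.2.2) := by
  simp only [M.P_eq_sum_probS, M'.P_eq_sum, M.probS_eq, hp1, hp2, hgamma]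

theorem full_reduced_same_PN_general
    {U1 U2 U5 U6 : Type} [Fintype U1] [Fintype U2] [Fintype U5] [Fintype U6]
    (M : FullSCM U1 U2 U5 U6) (M' : ReducedSCM U1 U2)
    (hp1 : M'.p1 = M.p1) (hp2 : M'.p2 = M.p2)
    (hfX : M'.fX = M.fX) (hfZ : M'.fZ = M.fZ) (hfY : M'.fY = M.fY)
    (hgamma : M'.gamma = M.P (fun u => M.S u = true)) :
    M'.P (fun u => M'.X u = true ∧ M'.Y u = true)
        = M.P (fun u => M.X u = true ∧ M.Y u = true) ∧
    M.P (fun u => M.Yx false u = false ∧ M.X u = true ∧ M.Y u = true)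
        / M.P (fun u => M.X u = true ∧ M.Y u = true)
      = M'.P (fun u => M'.Yx false u = false ∧ M'.X u = true ∧ M'.Y u = true)
        / M'.P (fun u => M'.X u = true ∧ M'.Y u = true) := by
  simp only [ReducedSCM.Yx, ReducedSCM.Y, ReducedSCM.Z, ReducedSCM.X, ReducedSCM.S,
    hfX, hfZ, hfY]
  have hXY := M.P_eq_reducedSCM_P M' hp1 hp2 hgamma
    fun u1 u2 s => M.fX u1 = true ∧ M.fY (M.fZ s (M.fX u1) u2) u1 = true
  have hPN := M.P_eq_reducedSCM_P M' hp1 hp2 hgamma fun u1 u2 s =>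
    M.fY (M.fZ s false u2) u1 = false ∧ M.fX u1 = true ∧ M.fY (M.fZ s (M.fX u1) u2) u1 = true
  exact ⟨hXY.symm, congrArg₂ (· / ·) hPN hXY⟩

/-- A full SCM `M` and a reduced SCM `M'` sharing the data
`(U1, p1, fX, fY)` and `(U2, p2, fZ)`, with `γ = P_M(S = 1)` and
`P_M(X = 1, Y = 1) > 0`, give the same `P(X = 1, Y = 1)` and the same
probability of necessity. -/
theorem full_reduced_same_PN
    {U1 U2 U5 U6 : Type} [Fintype U1] [Fintype U2] [Fintype U5] [Fintype U6]
    (M : FullSCM U1 U2 U5 U6) (M' : ReducedSCM U1 U2)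
    (hp1 : M'.p1 = M.p1) (hp2 : M'.p2 = M.p2)
    (hfX : M'.fX = M.fX) (hfZ : M'.fZ = M.fZ) (hfY : M'.fY = M.fY)
    (hgamma : M'.gamma = M.P (fun u => M.S u = true))
    (hpos : 0 < M.P (fun u => M.X u = true ∧ M.Y u = true)) :
    M'.P (fun u => M'.X u = true ∧ M'.Y u = true)
        = M.P (fun u => M.X u = true ∧ M.Y u = true) ∧
    M.P (fun u => M.Yx false u = false ∧ M.X u = true ∧ M.Y u = true)
        / M.P (fun u => M.X u = true ∧ M.Y u = true)
      = M'.P (fun u => M'.Yx false u = false ∧ M'.X u = true ∧ M'.Y u = true)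
        / M'.P (fun u => M'.X u = true ∧ M'.Y u = true) :=
  full_reduced_same_PN_general M M' hp1 hp2 hfX hfZ hfY hgamma
end

section
/- In any full SCM, the variables (X, Z, Y, Y_{X=0}, Y_{X=1}) are jointly conditionally independent of T given S: for every assignment (x, z, y, a, b, t, s) in {0,1}^7, P(X = x, Z = z, Y = y, Y_{X=0} = a, Y_{X=1} = b, T = t, S = s) · P(S = s) = P(X = x, Z = z, Y = y, Y_{X=0} = a, Y_{X=1} = b, S = s) · P(T = t, S = s). -/
open Finset

attribute [local instance] Classical.propDecidable

/-! The exogenous block `(u1, u2)` drives `X`, `Z`, `Y` and the potential outcomes, while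
`(u5, u6)` drives `T` and `S`, and the two blocks are independent. Once `S = s` is fixed,
the outcomes become a function of `(u1, u2)` alone, so the joint event factors into an event
of `(u1, u2)` and an event of `(u5, u6)`, and both sides of the identity equal the same product
of three probabilities. -/

theorem Fintype.sum_prod_ite_and_mul {α β : Type*} [Fintype α] [Fintype β]
    (g : α → Prop) (h : β → Prop) [DecidablePred g] [DecidablePred h] (f : α → ℝ) (k : β → ℝ) :
    ∑ x : α × β, (if g x.1 ∧ h x.2 then f x.1 * k x.2 else 0)
      = (∑ a, if g a then f a else 0) * ∑ b, if h b then k b else 0 := by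
  simp only [Finset.sum_mul_sum, Fintype.sum_prod_type, ite_zero_mul_ite_zero]

namespace FullSCM

variable {U1 U2 U5 U6 : Type} [Fintype U1] [Fintype U2] [Fintype U5] [Fintype U6]
  (M : FullSCM U1 U2 U5 U6)

/-- `(X, Z, Y, Y_{X=0}, Y_{X=1})` given `S = s`. -/
def outcomes (s : Bool) (v : U1 × U2) : Bool × Bool × Bool × Bool × Bool :=
  (M.fX v.1, M.fZ s (M.fX v.1) v.2, M.fY (M.fZ s (M.fX v.1) v.2) v.1,
    M.fY (M.fZ s false v.2) v.1, M.fY (M.fZ s true v.2) v.1)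

theorem outcomes_eq_and_S_eq_iff (u : U1 × U2 × U5 × U6) (x z y a b s : Bool) :
    M.outcomes s (u.1, u.2.1) = (x, z, y, a, b) ∧ M.S u = s ↔
      (M.X u = x ∧ M.Z u = z ∧ M.Y u = y ∧ M.Yx false u = a ∧ M.Yx true u = b) ∧ M.S u = s := by
  constructor <;> rintro ⟨h, rfl⟩ <;> exact ⟨by simpa only [outcomes, Prod.mk.injEq, X, Z, Y, Yx] using h, rfl⟩

theorem P_and_eq (g : U1 × U2 → Prop) (h : U5 × U6 → Prop) :
    M.P (fun u => g (u.1, u.2.1) ∧ h u.2.2)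
      = (∑ v, if g v then M.p1 v.1 * M.p2 v.2 else 0)
        * ∑ w, if h w then M.p5 w.1 * M.p6 w.2 else 0 := by
  rw [← Fintype.sum_prod_ite_and_mul, P, ← (Equiv.prodAssoc U1 U2 (U5 × U6)).sum_comp]
  simp only [w, Equiv.prodAssoc_apply, mul_assoc]

theorem P_and_eq_mul (g : U1 × U2 → Prop) (h : U5 × U6 → Prop) :
    M.P (fun u => g (u.1, u.2.1) ∧ h u.2.2)
      = M.P (fun u => g (u.1, u.2.1)) * M.P (fun u => h u.2.2) := by
  have hg := M.P_and_eq g fun _ => True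
  have hh := M.P_and_eq (fun _ => True) h
  have h12 : ∑ v : U1 × U2, M.p1 v.1 * M.p2 v.2 = 1 := by
    rw [Fintype.sum_prod_type, ← Fintype.sum_mul_sum, M.p1_sum, M.p2_sum, mul_one]
  have h56 : ∑ w : U5 × U6, M.p5 w.1 * M.p6 w.2 = 1 := by
    rw [Fintype.sum_prod_type, ← Fintype.sum_mul_sum, M.p5_sum, M.p6_sum, mul_one]
  simp only [and_true, true_and, if_true, h12, h56, mul_one, one_mul] at hg hh
  rw [P_and_eq, hg, hh]

end FullSCM

/-- In any full SCM, `(X, Z, Y, Y_{X=0}, Y_{X=1})` is jointly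
conditionally independent of `T` given `S`. -/
theorem cond_indep_of_T_given_S
    {U1 U2 U5 U6 : Type} [Fintype U1] [Fintype U2] [Fintype U5] [Fintype U6]
    (M : FullSCM U1 U2 U5 U6) :
    ∀ x z y a b t s : Bool,
      M.P (fun u => M.X u = x ∧ M.Z u = z ∧ M.Y u = y ∧
            M.Yx false u = a ∧ M.Yx true u = b ∧ M.T u = t ∧ M.S u = s)
          * M.P (fun u => M.S u = s)
        = M.P (fun u => M.X u = x ∧ M.Z u = z ∧ M.Y u = y ∧
            M.Yx false u = a ∧ M.Yx true u = b ∧ M.S u = s)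
          * M.P (fun u => M.T u = t ∧ M.S u = s) := by
  intro x z y a b t s
  let O : U1 × U2 → Prop := fun v => M.outcomes s v = (x, z, y, a, b)
  let Sw : U5 × U6 → Prop := fun w => M.fS (M.fT w.2) w.1 = s
  let TSw : U5 × U6 → Prop := fun w => M.fT w.2 = t ∧ Sw w
  have hTS : (fun u => M.X u = x ∧ M.Z u = z ∧ M.Y u = y ∧
      M.Yx false u = a ∧ M.Yx true u = b ∧ M.T u = t ∧ M.S u = s)
      = fun u => O (u.1, u.2.1) ∧ TSw u.2.2 := by
    ext u
    have := M.outcomes_eq_and_S_eq_iff u x z y a b s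
    simp only [O, TSw, Sw, FullSCM.T, FullSCM.S] at this ⊢
    tauto
  have hS : (fun u => M.X u = x ∧ M.Z u = z ∧ M.Y u = y ∧
      M.Yx false u = a ∧ M.Yx true u = b ∧ M.S u = s)
      = fun u => O (u.1, u.2.1) ∧ Sw u.2.2 := by
    ext u
    have := M.outcomes_eq_and_S_eq_iff u x z y a b s
    simp only [O, Sw, FullSCM.T, FullSCM.S] at this ⊢
    tauto
  change _ * M.P (fun u => Sw u.2.2) = _ * M.P (fun u => TSw u.2.2)
  rw [hTS, hS, M.P_and_eq_mul, M.P_and_eq_mul]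
  ring
end

section
/- In any reduced SCM, for every x, y, z ∈ {0,1} such that P(X = x, Z = z) > 0, the following linear-constraint identity holds: Σ_{u1 with fX(u1) = x and fY(z, u1) = y} p1(u1) = P(Y = y | X = x, Z = z) · P(X = x). -/
open Finset

attribute [local instance] Classical.propDecidable

/-! Every event in the theorem splits into a condition on `u1` and a condition on `(u2, s)`, and
the unit distribution is a product `p1 ⊗ (p2 ⊗ Bernoulli γ)`, so each probability factors.
Given `X = x`, the event `Y = y` becomes `fY z u1 = y`, a condition on `u1` alone; so the
`(u2, s)`-factor of `P(Y = y, X = x, Z = z)` cancels against that of `P(X = x, Z = z)`, and the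
`u1`-factor of the latter is `P(X = x)`. -/

namespace ReducedSCM

variable {U1 U2 : Type} [Fintype U1] [Fintype U2] (M : ReducedSCM U1 U2)

def w2 (v : U2 × Bool) : ℝ :=
  M.p2 v.1 * if v.2 then M.gamma else 1 - M.gamma

lemma w_eq_p1_mul_w2 (u : U1 × U2 × Bool) : M.w u = M.p1 u.1 * M.w2 u.2 :=
  mul_assoc _ _ _

lemma sum_w2 : ∑ v, M.w2 v = 1 := by
  simp only [w2, Fintype.sum_prod_type, Fintype.sum_bool, if_true, Bool.false_eq_true, if_false,
    ← mul_add, add_sub_cancel, mul_one, M.p2_sum]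

lemma P_fst_and_snd_eq_mul (Q : U1 → Prop) [DecidablePred Q]
    (R : U2 × Bool → Prop) [DecidablePred R] :
    M.P (fun u => Q u.1 ∧ R u.2)
      = (∑ u1, if Q u1 then M.p1 u1 else 0) * ∑ v, if R v then M.w2 v else 0 := by
  rw [P, Fintype.sum_prod_type, sum_mul_sum]
  refine sum_congr rfl fun u1 _ => sum_congr rfl fun v _ => ?_
  rw [w_eq_p1_mul_w2]
  split_ifs <;> simp_all

lemma P_X_eq (x : Bool) :
    M.P (fun u => M.X u = x) = ∑ u1, if M.fX u1 = x then M.p1 u1 else 0 := by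
  simpa [X, sum_w2] using M.P_fst_and_snd_eq_mul (fun u1 => M.fX u1 = x) (fun _ => True)

lemma P_X_eq_and_Z_eq (x z : Bool) :
    M.P (fun u => M.X u = x ∧ M.Z u = z)
      = (∑ u1, if M.fX u1 = x then M.p1 u1 else 0)
        * ∑ v : U2 × Bool, if M.fZ v.2 x v.1 = z then M.w2 v else 0 := by
  rw [← P_fst_and_snd_eq_mul]
  congr! 2 with u
  simp only [X, Z, S]
  constructor <;> rintro ⟨rfl, h⟩ <;> exact ⟨rfl, h⟩

lemma P_Y_eq_and_X_eq_and_Z_eq (x y z : Bool) :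
    M.P (fun u => M.Y u = y ∧ M.X u = x ∧ M.Z u = z)
      = (∑ u1, if M.fX u1 = x ∧ M.fY z u1 = y then M.p1 u1 else 0)
        * ∑ v : U2 × Bool, if M.fZ v.2 x v.1 = z then M.w2 v else 0 := by
  rw [← P_fst_and_snd_eq_mul]
  congr! 2 with u
  simp only [Y, X, Z, S]
  constructor
  · rintro ⟨rfl, rfl, rfl⟩
    exact ⟨⟨rfl, rfl⟩, rfl⟩
  · rintro ⟨⟨rfl, rfl⟩, h⟩
    exact ⟨by rw [h], rfl, h⟩

end ReducedSCM

/-- In any reduced SCM, for `x, y, z` with `P(X = x, Z = z) > 0`,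
`Σ_{u1 : fX(u1) = x, fY(z, u1) = y} p1(u1) = P(Y = y | X = x, Z = z) · P(X = x)`. -/
theorem linear_constraint_U1 {U1 U2 : Type} [Fintype U1] [Fintype U2]
    (M : ReducedSCM U1 U2) (x y z : Bool)
    (hpos : 0 < M.P (fun u => M.X u = x ∧ M.Z u = z)) :
    (∑ u1 : U1, if M.fX u1 = x ∧ M.fY z u1 = y then M.p1 u1 else 0)
      = M.Pcond (fun u => M.Y u = y) (fun u => M.X u = x ∧ M.Z u = z)
        * M.P (fun u => M.X u = x) := by
  rw [M.P_X_eq_and_Z_eq] at hpos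
  obtain ⟨hX, hZ⟩ := mul_ne_zero_iff.mp hpos.ne'
  rw [ReducedSCM.Pcond, M.P_Y_eq_and_X_eq_and_Z_eq, M.P_X_eq_and_Z_eq, M.P_X_eq]
  field_simp
end

section
/- For every reduced SCM M' with parameter γ there exist nonnegative vectors q1 ∈ ℝ^8 and q2 ∈ ℝ^16, each summing to 1, such that the canonical reduced SCM with parameters (q1, q2, γ) induces exactly the same joint distribution of (X, Z, Y, S, Y_{X=0}, Y_{X=1}) as M'. In particular, canonicalization preserves the observational distribution and the values of PN, PS, and PNS. -/
open Finset

attribute [local instance] Classical.propDecidable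

/-- Canonical mechanism for `X`: `fX(j) = 1` iff `j ≥ 4`. -/
def fXc (j : Fin 8) : Bool := decide (4 ≤ (j : ℕ))

/-- Canonical mechanism for `Y`: by the value of `j mod 4`, `Y` is `0`, `z`,
`1 - z`, or `1`. -/
def fYc (z : Bool) (j : Fin 8) : Bool :=
  if (j : ℕ) % 4 = 0 then false
  else if (j : ℕ) % 4 = 1 then z
  else if (j : ℕ) % 4 = 2 then !z
  else true

/-- Canonical mechanism for `Z`: writing `k = 8·b0 + 4·b1 + 2·b2 + b3`,
`fZ(s, x, k) = b_{2s+x}`. -/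
def fZc (s x : Bool) (k : Fin 16) : Bool :=
  Nat.testBit (k : ℕ) (3 - (2 * s.toNat + x.toNat))

/-- `h1 = (1−γ)(q2_4 + q2_5 + q2_6 + q2_7) + γ(q2_1 + q2_5 + q2_9 + q2_13)`. -/
def h1 (q2 : Fin 16 → ℝ) (γ : ℝ) : ℝ :=
  (1 - γ) * (q2 4 + q2 5 + q2 6 + q2 7) + γ * (q2 1 + q2 5 + q2 9 + q2 13)

/-- `h2 = (1−γ)(q2_8 + q2_9 + q2_10 + q2_11) + γ(q2_2 + q2_6 + q2_10 + q2_14)`. -/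
def h2 (q2 : Fin 16 → ℝ) (γ : ℝ) : ℝ :=
  (1 - γ) * (q2 8 + q2 9 + q2 10 + q2 11) + γ * (q2 2 + q2 6 + q2 10 + q2 14)

/-- The canonical reduced SCM with parameters `(q1, q2, γ)`. -/
def canonicalSCM (q1 : Fin 8 → ℝ) (q2 : Fin 16 → ℝ) (γ : ℝ)
    (hq1 : ∀ j, 0 ≤ q1 j) (hs1 : ∑ j, q1 j = 1)
    (hq2 : ∀ k, 0 ≤ q2 k) (hs2 : ∑ k, q2 k = 1)
    (hγ0 : 0 ≤ γ) (hγ1 : γ ≤ 1) : ReducedSCM (Fin 8) (Fin 16) where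
  p1 := q1
  p2 := q2
  gamma := γ
  p1_nonneg := hq1
  p2_nonneg := hq2
  p1_sum := hs1
  p2_sum := hs2
  gamma_nonneg := hγ0
  gamma_le_one := hγ1
  fX := fXc
  fZ := fZc
  fY := fYc

/-!
An exogenous `u1` influences `X`, `Y`, `Y_{X=0}`, `Y_{X=1}` only through its response type
`(fX u1, fY 0 u1, fY 1 u1)`, one of 8 values, and `u2` influences `Z` only through its response
type `(fZ s x u2)_{s,x}`, one of 16 values; the canonical SCM enumerates exactly these types.
Pushing `p1` and `p2` forward along the type maps therefore gives canonical parameters, and since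
the weight of a unit factors as `p1 u1 * p2 u2 * P(S = s)`, every event has the same probability
in both models.
-/

section FiberSum

variable {α β : Type*} [Fintype α] [DecidableEq β]

def fiberSum (e : α → β) (p : α → ℝ) (b : β) : ℝ :=
  ∑ a with e a = b, p a

lemma fiberSum_nonneg (e : α → β) {p : α → ℝ} (hp : ∀ a, 0 ≤ p a) (b : β) :
    0 ≤ fiberSum e p b :=
  sum_nonneg fun a _ => hp a

lemma sum_fiberSum [Fintype β] (e : α → β) (p : α → ℝ) : ∑ b, fiberSum e p b = ∑ a, p a :=
  sum_fiberwise _ e p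

lemma sum_fiberSum_mul [Fintype β] (e : α → β) (p : α → ℝ) (G : β → ℝ) :
    ∑ b, fiberSum e p b * G b = ∑ a, p a * G (e a) := by
  calc ∑ b, fiberSum e p b * G b = ∑ b, ∑ a with e a = b, p a * G (e a) := by
        refine sum_congr rfl fun b _ => ?_
        rw [fiberSum, sum_mul]
        exact sum_congr rfl fun a ha => by rw [(mem_filter.1 ha).2]
    _ = ∑ a, p a * G (e a) := sum_fiberwise _ e _

end FiberSum

namespace ReducedSCM

variable {U1 U2 V1 V2 : Type} [Fintype U1] [Fintype U2] [Fintype V1] [Fintype V2]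

lemma P_eq_sum_s12 (M : ReducedSCM U1 U2) (E : U1 × U2 × Bool → Prop) :
    M.P E = ∑ u1, M.p1 u1 * ∑ u2, M.p2 u2 *
      ∑ s : Bool, if E (u1, u2, s) then (if s then M.gamma else 1 - M.gamma) else 0 := by
  simp only [P, w, Fintype.sum_prod_type, mul_sum, mul_ite, mul_zero, mul_assoc]

lemma P_eq_P_of_fiberSum [DecidableEq V1] [DecidableEq V2] (M : ReducedSCM U1 U2)
    (N : ReducedSCM V1 V2) (e1 : U1 → V1) (e2 : U2 → V2)
    (h1 : N.p1 = fiberSum e1 M.p1) (h2 : N.p2 = fiberSum e2 M.p2) (hγ : N.gamma = M.gamma)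
    (E : V1 × V2 × Bool → Prop) :
    N.P E = M.P (fun u => E (e1 u.1, e2 u.2.1, u.2.2)) := by
  simp only [P_eq_sum_s12, h1, h2, hγ, sum_fiberSum_mul]

end ReducedSCM

def encodeU1 (x y0 y1 : Bool) : Fin 8 :=
  Fin.ofNat 8 (4 * x.toNat + 2 * y0.toNat + y1.toNat)

def encodeU2 (b0 b1 b2 b3 : Bool) : Fin 16 :=
  Fin.ofNat 16 (8 * b0.toNat + 4 * b1.toNat + 2 * b2.toNat + b3.toNat)

lemma fXc_encodeU1 (x y0 y1 : Bool) : fXc (encodeU1 x y0 y1) = x := by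
  revert x y0 y1; decide

lemma fYc_encodeU1 (z x y0 y1 : Bool) : fYc z (encodeU1 x y0 y1) = cond z y1 y0 := by
  revert z x y0 y1; decide

lemma fZc_encodeU2 (s x b0 b1 b2 b3 : Bool) :
    fZc s x (encodeU2 b0 b1 b2 b3) = cond s (cond x b3 b2) (cond x b1 b0) := by
  revert s x b0 b1 b2 b3; decide

namespace ReducedSCM

variable {U1 U2 : Type} [Fintype U1] [Fintype U2]

def toCanonicalU1 (M : ReducedSCM U1 U2) (u : U1) : Fin 8 :=
  encodeU1 (M.fX u) (M.fY false u) (M.fY true u)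

def toCanonicalU2 (M : ReducedSCM U1 U2) (u : U2) : Fin 16 :=
  encodeU2 (M.fZ false false u) (M.fZ false true u) (M.fZ true false u) (M.fZ true true u)

lemma fXc_toCanonicalU1 (M : ReducedSCM U1 U2) (u : U1) :
    fXc (M.toCanonicalU1 u) = M.fX u :=
  fXc_encodeU1 ..

lemma fYc_toCanonicalU1 (M : ReducedSCM U1 U2) (z : Bool) (u : U1) :
    fYc z (M.toCanonicalU1 u) = M.fY z u := by
  cases z <;> exact fYc_encodeU1 ..

lemma fZc_toCanonicalU2 (M : ReducedSCM U1 U2) (s x : Bool) (u : U2) :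
    fZc s x (M.toCanonicalU2 u) = M.fZ s x u := by
  cases s <;> cases x <;> exact fZc_encodeU2 ..

end ReducedSCM

/-- Every reduced SCM `M'` with parameter `γ` admits canonical
parameters `(q1, q2)` such that the canonical reduced SCM with parameters
`(q1, q2, γ)` induces the same joint distribution of
`(X, Z, Y, S, Y_{X=0}, Y_{X=1})` as `M'`. -/
theorem canonicalization_exists {U1 U2 : Type} [Fintype U1] [Fintype U2]
    (M' : ReducedSCM U1 U2) :
    ∃ (q1 : Fin 8 → ℝ) (q2 : Fin 16 → ℝ)
      (hq1 : ∀ j, 0 ≤ q1 j) (hs1 : ∑ j, q1 j = 1)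
      (hq2 : ∀ k, 0 ≤ q2 k) (hs2 : ∑ k, q2 k = 1),
      ∀ x z y s a b : Bool,
        (canonicalSCM q1 q2 M'.gamma hq1 hs1 hq2 hs2
            M'.gamma_nonneg M'.gamma_le_one).P
          (fun u => fXc u.1 = x ∧ fZc u.2.2 (fXc u.1) u.2.1 = z ∧
            fYc (fZc u.2.2 (fXc u.1) u.2.1) u.1 = y ∧ u.2.2 = s ∧
            fYc (fZc u.2.2 false u.2.1) u.1 = a ∧
            fYc (fZc u.2.2 true u.2.1) u.1 = b)
          = M'.P (fun u => M'.X u = x ∧ M'.Z u = z ∧ M'.Y u = y ∧ M'.S u = s ∧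
              M'.Yx false u = a ∧ M'.Yx true u = b) := by
  refine ⟨fiberSum M'.toCanonicalU1 M'.p1, fiberSum M'.toCanonicalU2 M'.p2,
    fiberSum_nonneg _ M'.p1_nonneg, (sum_fiberSum _ _).trans M'.p1_sum,
    fiberSum_nonneg _ M'.p2_nonneg, (sum_fiberSum _ _).trans M'.p2_sum,
    fun x z y s a b => ?_⟩
  rw [ReducedSCM.P_eq_P_of_fiberSum M' _ M'.toCanonicalU1 M'.toCanonicalU2 rfl rfl rfl]
  simp only [ReducedSCM.fXc_toCanonicalU1, ReducedSCM.fYc_toCanonicalU1,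
    ReducedSCM.fZc_toCanonicalU2]
  rfl
end

section
/- In any front-door SCM with P(X = x, Z = z) > 0 for all x, z ∈ {0,1}, the weak probability of sufficiency is identified by the front-door formula: P(Y = 1 | do(X = 1)) = Σ_{z ∈ {0,1}} P(Z = z | X = 1) · Σ_{x ∈ {0,1}} P(Y = 1 | X = x, Z = z) · P(X = x). -/
open Finset

attribute [local instance] Classical.propDecidable

/-- A front-door SCM (Pearl's Smoking/Tar/Cancer example): exogenous `U1`
confounding `X` and `Y`, exogenous `U2` for `Z`, mechanisms `fX`, `fZ`, `fY`. -/
structure FrontdoorSCM (U1 U2 : Type) [Fintype U1] [Fintype U2] where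
  p1 : U1 → ℝ
  p2 : U2 → ℝ
  p1_nonneg : ∀ u, 0 ≤ p1 u
  p2_nonneg : ∀ u, 0 ≤ p2 u
  p1_sum : ∑ u, p1 u = 1
  p2_sum : ∑ u, p2 u = 1
  fX : U1 → Bool
  fZ : Bool → U2 → Bool
  fY : Bool → U1 → Bool

namespace FrontdoorSCM

variable {U1 U2 : Type} [Fintype U1] [Fintype U2]

/-- Probability of a unit `(u1, u2)`. -/
def w (M : FrontdoorSCM U1 U2) (u : U1 × U2) : ℝ := M.p1 u.1 * M.p2 u.2

/-- Observational probability of an event. -/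
noncomputable def P (M : FrontdoorSCM U1 U2) (E : U1 × U2 → Prop) : ℝ :=
  ∑ u, if E u then M.w u else 0

/-- Conditional probability `P(A | B)`. -/
noncomputable def Pcond (M : FrontdoorSCM U1 U2) (A B : U1 × U2 → Prop) : ℝ :=
  M.P (fun u => A u ∧ B u) / M.P B

def X (M : FrontdoorSCM U1 U2) (u : U1 × U2) : Bool := M.fX u.1

def Z (M : FrontdoorSCM U1 U2) (u : U1 × U2) : Bool := M.fZ (M.X u) u.2

def Y (M : FrontdoorSCM U1 U2) (u : U1 × U2) : Bool := M.fY (M.Z u) u.1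

/-- Interventional probability `P(Y = y | do(X = x))`. -/
noncomputable def Pdo (M : FrontdoorSCM U1 U2) (x y : Bool) : ℝ :=
  ∑ u : U1 × U2, if M.fY (M.fZ x u.2) u.1 = y then M.w u else 0

end FrontdoorSCM

/-!
The exogenous noise splits into independent parts: `u1` drives `X` and `Y`, `u2` drives `Z`.
Hence every event that constrains `u1` and `u2` separately has probability equal to a
`p1`-mass times a `p2`-mass. Conditioning on `X = x, Z = z` isolates these factors:
`P(Z = z | X = 1)` is the `p2`-mass of `{fZ 1 · = z}`, and `P(Y = 1 | X = x, Z = z) · P(X = x)`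
is the `p1`-mass of `{fY z · = 1, fX · = x}`. Summing over `x` leaves the `p1`-mass of
`{fY z · = 1}`, and summing over `z` gives the interventional probability.
-/

section Mass

variable {α β : Type*} [Fintype α] [Fintype β]

noncomputable def mass (p : α → ℝ) (E : α → Prop) : ℝ :=
  ∑ a, if E a then p a else 0

theorem mass_congr (p : α → ℝ) {E F : α → Prop} (h : ∀ a, E a ↔ F a) :
    mass p E = mass p F := by
  simp only [mass, h]

theorem mass_true (p : α → ℝ) : mass p (fun _ => True) = ∑ a, p a := by
  simp only [mass, if_true]

theorem mass_eq_sum_fibers {ι : Type*} [Fintype ι] (p : α → ℝ) (E : α → Prop) (g : α → ι) :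
    mass p E = ∑ i, mass p (fun a => E a ∧ g a = i) := by
  simp only [mass]
  rw [sum_comm]
  refine sum_congr rfl fun a _ => ?_
  by_cases hE : E a <;> simp [hE]

theorem mass_prod (p : α → ℝ) (q : β → ℝ) (E : α → Prop) (F : β → Prop) :
    mass (fun u : α × β => p u.1 * q u.2) (fun u => E u.1 ∧ F u.2) = mass p E * mass q F := by
  simp only [mass, sum_mul_sum, ite_zero_mul_ite_zero, Fintype.sum_prod_type]

end Mass

namespace FrontdoorSCM

variable {U1 U2 : Type} [Fintype U1] [Fintype U2] (M : FrontdoorSCM U1 U2)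

theorem P_fst_and_snd (E1 : U1 → Prop) (E2 : U2 → Prop) :
    M.P (fun u => E1 u.1 ∧ E2 u.2) = mass M.p1 E1 * mass M.p2 E2 :=
  mass_prod M.p1 M.p2 E1 E2

theorem P_X_eq (x : Bool) : M.P (fun u => M.X u = x) = mass M.p1 (M.fX · = x) := by
  calc M.P (fun u => M.X u = x)
      = M.P (fun u => M.fX u.1 = x ∧ True) := mass_congr _ fun u => by simp [X]
    _ = mass M.p1 (M.fX · = x) := by
      rw [P_fst_and_snd _ (M.fX · = x) fun _ => True, mass_true, M.p2_sum, mul_one]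

theorem P_X_Z_eq (x z : Bool) :
    M.P (fun u => M.X u = x ∧ M.Z u = z) = mass M.p1 (M.fX · = x) * mass M.p2 (M.fZ x · = z) := by
  rw [← P_fst_and_snd]
  exact mass_congr _ fun u => by
    simp only [Z, X]
    constructor <;> rintro ⟨rfl, h⟩ <;> exact ⟨rfl, h⟩

theorem P_Z_X_eq (x z : Bool) :
    M.P (fun u => M.Z u = z ∧ M.X u = x) = mass M.p1 (M.fX · = x) * mass M.p2 (M.fZ x · = z) := by
  rw [← P_X_Z_eq]
  exact mass_congr _ fun u => and_comm

theorem P_Y_X_Z_eq (x y z : Bool) :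
    M.P (fun u => M.Y u = y ∧ M.X u = x ∧ M.Z u = z)
      = mass M.p1 (fun u1 => M.fY z u1 = y ∧ M.fX u1 = x) * mass M.p2 (M.fZ x · = z) := by
  rw [← P_fst_and_snd]
  exact mass_congr _ fun u => by
    simp only [Y, Z, X]
    constructor
    · rintro ⟨hy, rfl, rfl⟩; exact ⟨⟨hy, rfl⟩, rfl⟩
    · rintro ⟨⟨hy, rfl⟩, rfl⟩; exact ⟨hy, rfl, rfl⟩

theorem Pdo_eq_P (x y : Bool) : M.Pdo x y = M.P (fun u => M.fY (M.fZ x u.2) u.1 = y) := by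
  -- not `rfl`: `Pdo` decides `_ = y` with `Bool`'s `DecidableEq`, `P` classically
  unfold Pdo P
  congr! 3

theorem Pdo_eq_sum (x y : Bool) :
    M.Pdo x y = ∑ z : Bool, mass M.p1 (M.fY z · = y) * mass M.p2 (M.fZ x · = z) := by
  calc M.Pdo x y = ∑ z : Bool, M.P (fun u => M.fY z u.1 = y ∧ M.fZ x u.2 = z) := by
        rw [Pdo_eq_P, P, ← mass, mass_eq_sum_fibers _ _ fun u => M.fZ x u.2]
        refine sum_congr rfl fun z _ => mass_congr _ fun u => ?_
        constructor <;> rintro ⟨h, hz⟩ <;> simp_all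
    _ = _ := sum_congr rfl fun z _ => M.P_fst_and_snd (M.fY z · = y) (M.fZ x · = z)

end FrontdoorSCM

/-- In any front-door SCM with `P(X = x, Z = z) > 0` for all
`x, z`, the weak probability of sufficiency is identified by the front-door
formula:
`P(Y = 1 | do(X = 1)) = Σ_z P(Z = z | X = 1) · Σ_x P(Y = 1 | X = x, Z = z) · P(X = x)`. -/
theorem frontdoor_wPS {U1 U2 : Type} [Fintype U1] [Fintype U2]
    (M : FrontdoorSCM U1 U2)
    (hpos : ∀ x z : Bool, 0 < M.P (fun u => M.X u = x ∧ M.Z u = z)) :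
    M.Pdo true true
      = ∑ z : Bool,
          M.Pcond (fun u => M.Z u = z) (fun u => M.X u = true)
            * ∑ x : Bool,
                M.Pcond (fun u => M.Y u = true) (fun u => M.X u = x ∧ M.Z u = z)
                  * M.P (fun u => M.X u = x) := by
  have hne : ∀ x z, mass M.p1 (M.fX · = x) * mass M.p2 (M.fZ x · = z) ≠ 0 := fun x z =>
    M.P_X_Z_eq x z ▸ (hpos x z).ne'
  simp only [FrontdoorSCM.Pcond, M.Pdo_eq_sum, M.P_X_eq, M.P_X_Z_eq, M.P_Z_X_eq, M.P_Y_X_Z_eq]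
  refine sum_congr rfl fun z _ => ?_
  rw [mul_div_cancel_left₀ _ (left_ne_zero_of_mul (hne true z)), mul_comm,
    mass_eq_sum_fibers M.p1 _ M.fX]
  congr 1
  refine sum_congr rfl fun x _ => ?_
  rw [mul_div_mul_right _ _ (right_ne_zero_of_mul (hne x z)),
    div_mul_cancel₀ _ (left_ne_zero_of_mul (hne x z))]
end
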